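/- Let P = P₀⋯P_ℓ and R⁽¹⁾,...,R⁽ᵏ⁾ be endomorphisms of V with all P_i and R⁽ʲ⁾ mutually commuting, and suppose id_V = Σ_{i=0}^ℓ Q_i P^i + Σ_{j=1}^k S_j R⁽ʲ⁾ where all Q_i, S_j commute with all P_m and R⁽ᵖ⁾. Fix f, g¹,...,gᵏ ∈ V satisfying R⁽ʲ⁾f = P gʲ and R⁽ʲ⁾gⁱ = R⁽ⁱ⁾gʲ. Then u ∈ V solves the system {P u = f, R⁽ʲ⁾u = gʲ for all j} if and only if (u₀,...,u_ℓ) := (P⁰u,...,P^ℓ u) solves the system {P_i u_i = f and R⁽ʲ⁾u_i = P^i gʲ for all i, j}, and the map u ↦ (P^i u)_i is a bijection between the two solution sets with inverse (u_i)_i ↦ Σ_i Q_i u_i + Σ_j S_j gʲ. -/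

import Mathlib

/-!
Write `P^i` for the product of the `P_m` with `m ≠ i`. The forward map preserves solutions since
`P = P_i P^i` and `P^i` commutes with every `R⁽ʲ⁾`. Everything else is the identity
`v = Σ_i Q_i P^i v + Σ_j S_j R⁽ʲ⁾ v` for a suitable `v`: pushing `P`, `R⁽ʲ⁾` or `P^r` through the
`Q_i` and `S_j` turns the image of the candidate `Σ_i Q_i u_i + Σ_j S_j gʲ` into this sum for
`v = f`, `gʲ` or `u_r` respectively. For this one substitutes the integrability conditions, or the
lower systems through `P^r u_i = P^{ir} P_i u_i = P^{ir} f = P^i u_r` (with `P^{ir} = ∏_{m ≠ i, r} P_m`).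
-/

open Finset

/-- The product `∏_{j ∈ s} P j` of a family of pairwise commuting endomorphisms. -/
def prodOver {R : Type*} [Monoid R] {n : ℕ} (P : Fin n → R)
    (hP : ∀ i j, Commute (P i) (P j)) (s : Finset (Fin n)) : R :=
  s.noncommProd P fun a _ b _ _ => hP a b

section Monoid

variable {M : Type*} [Monoid M] {n : ℕ} {P : Fin n → M} {hP : ∀ i j, Commute (P i) (P j)}

theorem prodOver_eq_mul_prodOver_erase {s : Finset (Fin n)} {i : Fin n} (hi : i ∈ s) :
    prodOver P hP s = P i * prodOver P hP (s.erase i) :=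
  (s.mul_noncommProd_erase hi P _).symm

theorem prodOver_eq_prodOver_erase_mul {s : Finset (Fin n)} {i : Fin n} (hi : i ∈ s) :
    prodOver P hP s = prodOver P hP (s.erase i) * P i :=
  (s.noncommProd_erase_mul hi P _).symm

theorem Commute.prodOver_right {a : M} (h : ∀ i, Commute a (P i)) (s : Finset (Fin n)) :
    Commute a (prodOver P hP s) :=
  s.noncommProd_commute P _ a fun i _ => h i

end Monoid

section End

variable {F V : Type*} [Semiring F] [AddCommMonoid V] [Module F V]

theorem Commute.apply_apply_comm {a b : Module.End F V} (h : Commute a b) (v : V) :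
    a (b v) = b (a v) :=
  LinearMap.congr_fun h v

theorem sum_apply_add_sum_apply_eq_self {ι κ : Type*} [Fintype ι] [Fintype κ]
    {Q A : ι → Module.End F V} {S B : κ → Module.End F V}
    (h : ∑ i, Q i * A i + ∑ j, S j * B j = 1) (v : V) :
    ∑ i, Q i (A i v) + ∑ j, S j (B j v) = v := by
  simpa using LinearMap.congr_fun h v

theorem prodOver_erase_apply_eq_of_apply_eq {n : ℕ} {P : Fin n → Module.End F V}
    {hP : ∀ i j, Commute (P i) (P j)} {s : Finset (Fin n)} {i r : Fin n} (hi : i ∈ s)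
    (hr : r ∈ s) {w : Fin n → V} (h : P i (w i) = P r (w r)) :
    prodOver P hP (s.erase r) (w i) = prodOver P hP (s.erase i) (w r) := by
  rcases eq_or_ne i r with rfl | hir
  · rfl
  rw [prodOver_eq_prodOver_erase_mul (mem_erase.2 ⟨hir, hi⟩),
    prodOver_eq_prodOver_erase_mul (mem_erase.2 ⟨hir.symm, hr⟩), Module.End.mul_apply,
    Module.End.mul_apply, h, erase_right_comm]

end End

section Systems

variable {F V : Type*} [Semiring F] [AddCommMonoid V] [Module F V] {n k : ℕ}
  {P : Fin n → Module.End F V} {hP : ∀ i j, Commute (P i) (P j)} {R : Fin k → Module.End F V}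
  {Q : Fin n → Module.End F V} {S : Fin k → Module.End F V} {f u : V} {g : Fin k → V}
  {w : Fin n → V}

theorem lowerSystem_of_system (hPR : ∀ i j, Commute (P i) (R j))
    (hu : prodOver P hP univ u = f) (hRu : ∀ j, R j u = g j) (i : Fin n) :
    P i (prodOver P hP (univ.erase i) u) = f ∧
      ∀ j, R j (prodOver P hP (univ.erase i) u) = prodOver P hP (univ.erase i) (g j) := by
  refine ⟨?_, fun j => ?_⟩
  · rw [← Module.End.mul_apply, ← prodOver_eq_mul_prodOver_erase (mem_univ i), hu]
  · rw [← hRu j]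
    exact (Commute.prodOver_right (fun m => (hPR m j).symm) _).apply_apply_comm u

theorem system_of_lowerSystem (hQP : ∀ i m, Commute (Q i) (P m))
    (hQR : ∀ i p, Commute (Q i) (R p)) (hSP : ∀ p m, Commute (S p) (P m))
    (hSR : ∀ p q, Commute (S p) (R q))
    (hid : ∑ i, Q i * prodOver P hP (univ.erase i) + ∑ j, S j * R j = 1)
    (hint1 : ∀ j, R j f = prodOver P hP univ (g j)) (hint2 : ∀ i j, R j (g i) = R i (g j))
    (hw : ∀ i, P i (w i) = f ∧ ∀ j, R j (w i) = prodOver P hP (univ.erase i) (g j)) :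
    prodOver P hP univ (∑ i, Q i (w i) + ∑ j, S j (g j)) = f ∧
      ∀ j, R j (∑ i, Q i (w i) + ∑ j, S j (g j)) = g j := by
  refine ⟨?_, fun j => ?_⟩
  · have hQ (i : Fin n) :
        prodOver P hP univ (Q i (w i)) = Q i (prodOver P hP (univ.erase i) f) := by
      rw [← (Commute.prodOver_right (hQP i) _).apply_apply_comm,
        prodOver_eq_prodOver_erase_mul (mem_univ i), Module.End.mul_apply, (hw i).1]
    have hS (j : Fin k) : prodOver P hP univ (S j (g j)) = S j (R j f) := by
      rw [← (Commute.prodOver_right (hSP j) _).apply_apply_comm, hint1]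
    simp only [map_add, map_sum, hQ, hS]
    exact sum_apply_add_sum_apply_eq_self hid f
  · have hQ (i : Fin n) : R j (Q i (w i)) = Q i (prodOver P hP (univ.erase i) (g j)) := by
      rw [← (hQR i j).apply_apply_comm, (hw i).2]
    have hS (p : Fin k) : R j (S p (g p)) = S p (R p (g j)) := by
      rw [← (hSR p j).apply_apply_comm, hint2]
    simp only [map_add, map_sum, hQ, hS]
    exact sum_apply_add_sum_apply_eq_self hid (g j)

theorem sum_prodOver_erase_add_sum_eq_self
    (hid : ∑ i, Q i * prodOver P hP (univ.erase i) + ∑ j, S j * R j = 1)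
    (hRu : ∀ j, R j u = g j) :
    ∑ i, Q i (prodOver P hP (univ.erase i) u) + ∑ j, S j (g j) = u := by
  simpa only [hRu] using sum_apply_add_sum_apply_eq_self hid u

theorem prodOver_erase_sum_add_sum_eq_of_lowerSystem (hQP : ∀ i m, Commute (Q i) (P m))
    (hSP : ∀ p m, Commute (S p) (P m))
    (hid : ∑ i, Q i * prodOver P hP (univ.erase i) + ∑ j, S j * R j = 1)
    (hw : ∀ i, P i (w i) = f ∧ ∀ j, R j (w i) = prodOver P hP (univ.erase i) (g j))
    (r : Fin n) :
    prodOver P hP (univ.erase r) (∑ i, Q i (w i) + ∑ j, S j (g j)) = w r := by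
  have hQ (i : Fin n) :
      prodOver P hP (univ.erase r) (Q i (w i)) = Q i (prodOver P hP (univ.erase i) (w r)) := by
    rw [← (Commute.prodOver_right (hQP i) _).apply_apply_comm,
      prodOver_erase_apply_eq_of_apply_eq (mem_univ i) (mem_univ r) ((hw i).1.trans (hw r).1.symm)]
  have hS (j : Fin k) : prodOver P hP (univ.erase r) (S j (g j)) = S j (R j (w r)) := by
    rw [← (Commute.prodOver_right (hSP j) _).apply_apply_comm, (hw r).2]
  simp only [map_add, map_sum, hQ, hS]
  exact sum_apply_add_sum_apply_eq_self hid (w r)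

end Systems

theorem statement19_general {F V : Type*} [Field F] [AddCommGroup V] [Module F V]
    (ℓ k : ℕ) (P : Fin (ℓ + 1) → Module.End F V)
    (R : Fin k → Module.End F V)
    (hP : ∀ i j, Commute (P i) (P j))
    (hPR : ∀ i j, Commute (P i) (R j))
    (Q : Fin (ℓ + 1) → Module.End F V) (S : Fin k → Module.End F V)
    (hQP : ∀ i m, Commute (Q i) (P m)) (hQR : ∀ i p, Commute (Q i) (R p))
    (hSP : ∀ p m, Commute (S p) (P m)) (hSR : ∀ p q, Commute (S p) (R q))
    (hid : ∑ i : Fin (ℓ + 1), Q i * prodOver P hP (Finset.univ.erase i) +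
        ∑ j : Fin k, S j * R j = 1)
    (f : V) (g : Fin k → V)
    (hint1 : ∀ j, R j f = prodOver P hP Finset.univ (g j))
    (hint2 : ∀ i j, R j (g i) = R i (g j)) :
    -- (1) `F` maps solutions of the original system to solutions of the lower systems:
    (∀ u : V, prodOver P hP Finset.univ u = f → (∀ j, R j u = g j) →
      ∀ i, P i (prodOver P hP (Finset.univ.erase i) u) = f ∧
        ∀ j, R j (prodOver P hP (Finset.univ.erase i) u) =
          prodOver P hP (Finset.univ.erase i) (g j)) ∧
    -- (2) `B` maps solutions of the lower systems to solutions of the original system: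
    (∀ w : Fin (ℓ + 1) → V,
      (∀ i, P i (w i) = f ∧ ∀ j, R j (w i) =
        prodOver P hP (Finset.univ.erase i) (g j)) →
      prodOver P hP Finset.univ
          (∑ i, Q i (w i) + ∑ j, S j (g j)) = f ∧
        ∀ j, R j (∑ i, Q i (w i) + ∑ j, S j (g j)) = g j) ∧
    -- (3) `B ∘ F = id` on solutions of the original system:
    (∀ u : V, prodOver P hP Finset.univ u = f → (∀ j, R j u = g j) →
      ∑ i, Q i (prodOver P hP (Finset.univ.erase i) u) + ∑ j, S j (g j) = u) ∧
    -- (4) `F ∘ B = id` on solutions of the lower systems: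
    (∀ w : Fin (ℓ + 1) → V,
      (∀ i, P i (w i) = f ∧ ∀ j, R j (w i) =
        prodOver P hP (Finset.univ.erase i) (g j)) →
      ∀ r, prodOver P hP (Finset.univ.erase r)
          (∑ i, Q i (w i) + ∑ j, S j (g j)) = w r) :=
  ⟨fun _ hu hRu => lowerSystem_of_system hPR hu hRu,
    fun _ hw => system_of_lowerSystem hQP hQR hSP hSR hid hint1 hint2 hw,
    fun _ _ hRu => sum_prodOver_erase_add_sum_eq_self hid hRu,
    fun _ hw => prodOver_erase_sum_add_sum_eq_of_lowerSystem hQP hSP hid hw⟩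

/-- Theorem on systems: Let `P = P₀⋯P_ℓ` and `R⁽¹⁾,…,R⁽ᵏ⁾` be
mutually commuting endomorphisms of `V` with
`id_V = Σ_i Q_i P^i + Σ_j S_j R⁽ʲ⁾` (all `Q_i, S_j` commuting with all `P_m, R⁽ᵖ⁾`),
and let `f, g¹,…,gᵏ` satisfy the integrability conditions `R⁽ʲ⁾f = P gʲ` and
`R⁽ʲ⁾gⁱ = R⁽ⁱ⁾gʲ`.  Then `u ↦ (P^i u)_i` maps solutions of the system
`{P u = f, R⁽ʲ⁾u = gʲ}` to solutions of the system of systems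
`{P_i u_i = f, R⁽ʲ⁾u_i = P^i gʲ}`, the map `(u_i)_i ↦ Σ_i Q_i u_i + Σ_j S_j gʲ`
maps back, and the two maps are mutually inverse bijections between the two
solution sets. -/
theorem statement19 {F V : Type*} [Field F] [AddCommGroup V] [Module F V]
    (ℓ k : ℕ) (P : Fin (ℓ + 1) → Module.End F V)
    (R : Fin k → Module.End F V)
    (hP : ∀ i j, Commute (P i) (P j))
    (hPR : ∀ i j, Commute (P i) (R j))
    (hR : ∀ i j, Commute (R i) (R j))
    (Q : Fin (ℓ + 1) → Module.End F V) (S : Fin k → Module.End F V)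
    (hQP : ∀ i m, Commute (Q i) (P m)) (hQR : ∀ i p, Commute (Q i) (R p))
    (hSP : ∀ p m, Commute (S p) (P m)) (hSR : ∀ p q, Commute (S p) (R q))
    (hid : ∑ i : Fin (ℓ + 1), Q i * prodOver P hP (Finset.univ.erase i) +
        ∑ j : Fin k, S j * R j = 1)
    (f : V) (g : Fin k → V)
    (hint1 : ∀ j, R j f = prodOver P hP Finset.univ (g j))
    (hint2 : ∀ i j, R j (g i) = R i (g j)) :
    -- (1) `F` maps solutions of the original system to solutions of the lower systems:
    (∀ u : V, prodOver P hP Finset.univ u = f → (∀ j, R j u = g j) →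
      ∀ i, P i (prodOver P hP (Finset.univ.erase i) u) = f ∧
        ∀ j, R j (prodOver P hP (Finset.univ.erase i) u) =
          prodOver P hP (Finset.univ.erase i) (g j)) ∧
    -- (2) `B` maps solutions of the lower systems to solutions of the original system:
    (∀ w : Fin (ℓ + 1) → V,
      (∀ i, P i (w i) = f ∧ ∀ j, R j (w i) =
        prodOver P hP (Finset.univ.erase i) (g j)) →
      prodOver P hP Finset.univ
          (∑ i, Q i (w i) + ∑ j, S j (g j)) = f ∧
        ∀ j, R j (∑ i, Q i (w i) + ∑ j, S j (g j)) = g j) ∧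
    -- (3) `B ∘ F = id` on solutions of the original system:
    (∀ u : V, prodOver P hP Finset.univ u = f → (∀ j, R j u = g j) →
      ∑ i, Q i (prodOver P hP (Finset.univ.erase i) u) + ∑ j, S j (g j) = u) ∧
    -- (4) `F ∘ B = id` on solutions of the lower systems:
    (∀ w : Fin (ℓ + 1) → V,
      (∀ i, P i (w i) = f ∧ ∀ j, R j (w i) =
        prodOver P hP (Finset.univ.erase i) (g j)) →
      ∀ r, prodOver P hP (Finset.univ.erase r)
          (∑ i, Q i (w i) + ∑ j, S j (g j)) = w r) :=
  statement19_general ℓ k P R hP hPR Q S hQP hQR hSP hSR hid f g hint1 hint2
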